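/- Let N be a set of ground closures and let R_s, E_s, R_* be the candidate interpretation constructed from N. Let s be a ground term and (C·θ) a ground closure. If every term occurring in a negative literal of Cθ is smaller than s w.r.t. ≻, every term occurring in a positive literal of Cθ is smaller than or equal to s, and R_s ⊨ (C·θ), then R_* ⊨ (C·θ). -/

import Mathlib

/- Common infrastructure: first-order terms, clauses, ground rewrite systems,
   reduction orderings, the (Horn and non-Horn) R-normalization closure orderings,
   the Ground Closure (Horn) Superposition Calculus and its redundancy criterion,
   and the candidate interpretation construction, following Waldmann,
   "On the (In-)Completeness of Destructive Equality Resolution in the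
   Superposition Calculus". -/

set_option autoImplicit false
set_option maxHeartbeats 1000000

noncomputable section

/-- First-order terms over function symbols `F` and variables `V`. -/
inductive Trm (F V : Type) : Type
  | var : V → Trm F V
  | app : F → List (Trm F V) → Trm F V

namespace Trm
variable {F V : Type}

instance : DecidableEq (Trm F V) := Classical.decEq _

/-- Application of a substitution to a term. -/
def subst (θ : V → Trm F V) : Trm F V → Trm F V
  | var x => θ x
  | app f ts => app f (ts.attach.map fun t => subst θ t.1)
decreasing_by
  have := List.sizeOf_lt_of_mem t.2
  simp only [Trm.app.sizeOf_spec]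
  omega

/-- A term is ground if it contains no variables. -/
inductive IsGround : Trm F V → Prop
  | app {f : F} {ts : List (Trm F V)} : (∀ t ∈ ts, IsGround t) → IsGround (app f ts)

/-- The set of all subterms of a term (including the term itself). -/
def subterms : Trm F V → Finset (Trm F V)
  | var x => {var x}
  | app f ts => insert (app f ts) ((ts.attach.map fun t => subterms t.1).foldr (· ∪ ·) ∅)
decreasing_by
  have := List.sizeOf_lt_of_mem t.2
  simp only [Trm.app.sizeOf_spec]
  omega

/-- The set of proper subterms of a term (subterms at positions `> ε`). -/
def psubterms : Trm F V → Finset (Trm F V)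
  | var _ => ∅
  | app _ ts => (ts.map fun t => subterms t).foldr (· ∪ ·) ∅

end Trm

/-- Contexts: terms with exactly one hole. -/
inductive Ctx (F V : Type) : Type
  | hole : Ctx F V
  | app : F → List (Trm F V) → Ctx F V → List (Trm F V) → Ctx F V

/-- Filling the hole of a context with a term. -/
def Ctx.fill {F V : Type} : Ctx F V → Trm F V → Trm F V
  | .hole, t => t
  | .app f l c r, t => Trm.app f (l ++ c.fill t :: r)

variable {F V : Type}

/-- `RewAt R s t u root` holds iff `s` rewrites to `t` in one step using a rule of `R`
whose left-hand side is `u`, and `root = true` iff the rewrite position is `ε`. -/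
inductive RewAt (R : Set (Trm F V × Trm F V)) : Trm F V → Trm F V → Trm F V → Bool → Prop
  | root {u v : Trm F V} : (u, v) ∈ R → RewAt R u v u true
  | congr {t t' u : Trm F V} {b : Bool} {f : F} {l r : List (Trm F V)} :
      RewAt R t t' u b → RewAt R (.app f (l ++ t :: r)) (.app f (l ++ t' :: r)) u false

/-- One-step rewrite relation `s →_R t`. -/
def Step (R : Set (Trm F V × Trm F V)) (s t : Trm F V) : Prop := ∃ u b, RewAt R s t u b

/-- `t` is irreducible w.r.t. `R`. -/
def Irred (R : Set (Trm F V × Trm F V)) (t : Trm F V) : Prop := ∀ t', ¬ Step R t t'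

/-- `R` is left-reduced: the left-hand side of each rule is irreducible by the other rules. -/
def LeftReduced (R : Set (Trm F V × Trm F V)) : Prop := ∀ p ∈ R, Irred (R \ {p}) p.1

/-- A reduction ordering that is total on ground terms. -/
structure ReductionOrdering (F V : Type) where
  gt : Trm F V → Trm F V → Prop
  trans : ∀ {a b c : Trm F V}, gt a b → gt b c → gt a c
  wf : WellFounded fun a b : Trm F V => gt b a
  compat_ctx : ∀ {s t : Trm F V} (f : F) (l r : List (Trm F V)),
      gt s t → gt (.app f (l ++ s :: r)) (.app f (l ++ t :: r))
  compat_subst : ∀ {s t : Trm F V} (θ : V → Trm F V), gt s t → gt (s.subst θ) (t.subst θ)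
  total_ground : ∀ {s t : Trm F V}, s.IsGround → t.IsGround → s ≠ t → gt s t ∨ gt t s

/-- A left-reduced ground rewrite system contained in the reduction ordering `O`. -/
def GoodRS (O : ReductionOrdering F V) (R : Set (Trm F V × Trm F V)) : Prop :=
  LeftReduced R ∧ ∀ p ∈ R, p.1.IsGround ∧ p.2.IsGround ∧ O.gt p.1 p.2

/-- Reflexive-transitive rewriting to an `R`-normal form. -/
def ReachNF (R : Set (Trm F V × Trm F V)) (t t' : Trm F V) : Prop :=
  Relation.ReflTransGen (Step R) t t' ∧ Irred R t'

open Classical in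
/-- The `R`-normal form `t↓_R` of `t` (via choice; unique for terminating confluent `R`). -/
def nf (R : Set (Trm F V × Trm F V)) (t : Trm F V) : Trm F V :=
  if h : ∃ t', ReachNF R t t' then h.choose else t

/-- The graph of the labeled `R`-redex multiset function `rm_R(t,m)` of Definition 1:
`RM R t m S` holds iff `S` is a possible result of collecting the labeled redexes and
recursing along some `R`-normalization of `t`. -/
inductive RM (R : Set (Trm F V × Trm F V)) : Trm F V → ℕ → Multiset (Trm F V × ℕ) → Prop
  | irred {t : Trm F V} {m : ℕ} : Irred R t → RM R t m 0
  | step_top {t t' u : Trm F V} {b : Bool} {m : ℕ} {S : Multiset (Trm F V × ℕ)} :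
      RewAt R t t' u b → (b = true ∨ 0 < m) → RM R t' m S → RM R t m ((u, m) ::ₘ S)
  | step_deep {t t' u : Trm F V} {S : Multiset (Trm F V × ℕ)} :
      RewAt R t t' u false → RM R t' 0 S → RM R t 0 ((u, 1) ::ₘ S)

open Classical in
/-- The labeled `R`-redex multiset `rm_R(t,m)` (via choice; unique under the
hypotheses of Lemma 1). -/
def rm (R : Set (Trm F V × Trm F V)) (t : Trm F V) (m : ℕ) : Multiset (Trm F V × ℕ) :=
  if h : ∃ S, RM R t m S then h.choose else 0

/-- Equational literals. -/
inductive Lit (F V : Type) : Type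
  | pos : Trm F V → Trm F V → Lit F V
  | neg : Trm F V → Trm F V → Lit F V

instance : DecidableEq (Lit F V) := Classical.decEq _

def Lit.subst (θ : V → Trm F V) : Lit F V → Lit F V
  | .pos s t => .pos (s.subst θ) (t.subst θ)
  | .neg s t => .neg (s.subst θ) (t.subst θ)

def Lit.IsGround : Lit F V → Prop
  | .pos s t => s.IsGround ∧ t.IsGround
  | .neg s t => s.IsGround ∧ t.IsGround

def Lit.posQ : Lit F V → Bool
  | .pos _ _ => true
  | .neg _ _ => false

/-- A clause is a finite multiset of literals; `⊥` is the empty clause `0`. -/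
abbrev Clause (F V : Type) := Multiset (Lit F V)

def Clause.subst (θ : V → Trm F V) (C : Clause F V) : Clause F V := C.map (Lit.subst θ)

def Clause.IsGround (C : Clause F V) : Prop := ∀ L ∈ C, L.IsGround

/-- Horn clause: at most one positive literal. -/
def IsHorn (C : Clause F V) : Prop := Multiset.card (C.filter fun L => L.posQ = true) ≤ 1

/-- The (Dershowitz-Manna) multiset extension of a relation, `M` greater than `N`. -/
def MultGT {α : Type} (r : α → α → Prop) (M N : Multiset α) : Prop :=
  ∃ X Y Z, M = Z + X ∧ N = Z + Y ∧ X ≠ 0 ∧ ∀ y ∈ Y, ∃ x ∈ X, r x y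

/-- The multiset associated to a literal for the literal ordering. -/
def Lit.mset : Lit F V → Multiset (Trm F V)
  | .pos s t => {s, t}
  | .neg s t => {s, s, t, t}

/-- The literal ordering `≻_L`. -/
def litGT (O : ReductionOrdering F V) (L L' : Lit F V) : Prop := MultGT O.gt L.mset L'.mset

/-- The clause ordering `≻_C`. -/
def clauseGT (O : ReductionOrdering F V) (C D : Clause F V) : Prop := MultGT (litGT O) C D

/-- `L` is maximal w.r.t. the rest clause `D`. -/
def MaxIn (O : ReductionOrdering F V) (L : Lit F V) (D : Clause F V) : Prop :=
  ∀ L' ∈ D, ¬ litGT O L' L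

/-- `L` is strictly maximal w.r.t. the rest clause `D`. -/
def SMaxIn (O : ReductionOrdering F V) (L : Lit F V) (D : Clause F V) : Prop :=
  ∀ L' ∈ D, ¬ litGT O L' L ∧ L' ≠ L

section TermSets

def Lit.negSubs : Lit F V → Finset (Trm F V)
  | .neg s t => s.subterms ∪ t.subterms
  | .pos _ _ => ∅

def Lit.posPSubs : Lit F V → Finset (Trm F V)
  | .pos s t => s.psubterms ∪ t.psubterms
  | .neg _ _ => ∅

def Lit.posSubs : Lit F V → Finset (Trm F V)
  | .pos s t => s.subterms ∪ t.subterms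
  | .neg _ _ => ∅

def Lit.negTops : Lit F V → Finset (Trm F V)
  | .neg s t => {s, t}
  | .pos _ _ => ∅

def Lit.posTops : Lit F V → Finset (Trm F V)
  | .pos s t => {s, t}
  | .neg _ _ => ∅

def Lit.allSubs : Lit F V → Finset (Trm F V)
  | .pos s t => s.subterms ∪ t.subterms
  | .neg s t => s.subterms ∪ t.subterms

/-- `ss⁻(C)`: subterms of sides of negative literals. -/
def ssN (C : Clause F V) : Finset (Trm F V) := C.toFinset.sup Lit.negSubs
/-- `ss⁺_{>ε}(C)`: proper subterms of sides of positive literals. -/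
def ssPp (C : Clause F V) : Finset (Trm F V) := C.toFinset.sup Lit.posPSubs
/-- All subterms of sides of positive literals. -/
def ssP (C : Clause F V) : Finset (Trm F V) := C.toFinset.sup Lit.posSubs
/-- `ts⁻(C)`: sides of negative literals. -/
def tsN (C : Clause F V) : Finset (Trm F V) := C.toFinset.sup Lit.negTops
/-- `ts⁺(C)`: sides of positive literals. -/
def tsP (C : Clause F V) : Finset (Trm F V) := C.toFinset.sup Lit.posTops
/-- All subterms occurring in `C`. -/
def allSub (C : Clause F V) : Finset (Trm F V) := C.toFinset.sup Lit.allSubs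

/-- The labeled subterm set `lss(C)` of Definition 1. -/
def lss (C : Clause F V) : Finset (Trm F V × ℕ) :=
  (ssN C).image (fun t => (t, 2)) ∪ ((ssPp C \ ssN C).image fun t => (t, 1)) ∪
    ((tsP C \ (ssPp C ∪ ssN C)).image fun t => (t, 0))

/-- The labeled topterm set `lts(C)` of Definition 1. -/
def lts (C : Clause F V) : Finset (Trm F V × ℕ) :=
  (tsN C).image (fun t => (t, 2)) ∪ ((tsP C \ tsN C).image fun t => (t, 0))

end TermSets

/-- Contribution of one labeled subterm of `C` to `nm_R(C·θ)`. -/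
def nmElt (R : Set (Trm F V × Trm F V)) (θ : V → Trm F V) : Trm F V × ℕ → Multiset (Trm F V × ℕ)
  | (.var x, m) => rm R (θ x) m
  | (.app f ts, m) => rm R (.app f (ts.map fun t => nf R (t.subst θ))) m

/-- The `R`-normalization multiset `nm_R(C·θ)` of Definition 2 (Horn case). -/
def nm (R : Set (Trm F V × Trm F V)) (C : Clause F V) (θ : V → Trm F V) :
    Multiset (Trm F V × ℕ) :=
  (lss C).sum (nmElt R θ) + (lts C).sum fun p => {(nf R (p.1.subst θ), p.2)}

/-- A closure `(C·θ)`. -/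
abbrev Closure (F V : Type) := Clause F V × (V → Trm F V)

/-- The ground instance `Cθ` represented by a closure `(C·θ)`. -/
def Closure.inst (c : Closure F V) : Clause F V := Clause.subst c.2 c.1

def Closure.IsGround (c : Closure F V) : Prop := Clause.IsGround c.inst

/-- Equality of clauses up to bijective variable renaming. -/
def ClauseAlphaEq (C D : Clause F V) : Prop :=
  ∃ ρ : V ≃ V, Clause.subst (fun x => Trm.var (ρ x)) C = D

/-- Identification of closures: equal up to bijective renaming (with the same
ground instance). -/
def CloAlphaEq (c d : Closure F V) : Prop := ClauseAlphaEq c.1 d.1 ∧ c.inst = d.inst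

/-- The tie-breaking closure ordering `≻_Clo`: an arbitrary well-founded ordering on
ground closures, total on closures with the same ground instance, such that
`(C·θ₁) ≻_Clo (D·θ₂)` whenever `Cθ₁ = Dθ₂` and `D` is an instance of `C` but not
vice versa. -/
structure TieBreak (F V : Type) where
  gt : Closure F V → Closure F V → Prop
  wf : WellFounded fun a b : Closure F V => gt b a
  total : ∀ c d : Closure F V, c.inst = d.inst → CloAlphaEq c d ∨ gt c d ∨ gt d c
  inst_gt : ∀ c d : Closure F V, c.inst = d.inst →
      (∃ σ, Clause.subst σ c.1 = d.1) → (¬ ∃ σ, Clause.subst σ d.1 = c.1) → gt c d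

/-- Lexicographic combination of `≻` and `>` on labeled terms. -/
def lexGT (O : ReductionOrdering F V) (p q : Trm F V × ℕ) : Prop :=
  O.gt p.1 q.1 ∨ (p.1 = q.1 ∧ q.2 < p.2)

/-- The `R`-normalization closure ordering `≫_R` of Definition 2 (Horn case). -/
def cloGT (O : ReductionOrdering F V) (T : TieBreak F V) (R : Set (Trm F V × Trm F V))
    (c d : Closure F V) : Prop :=
  MultGT (lexGT O) (nm R c.1 c.2) (nm R d.1 d.2)
  ∨ (nm R c.1 c.2 = nm R d.1 d.2 ∧ clauseGT O c.inst d.inst)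
  ∨ (nm R c.1 c.2 = nm R d.1 d.2 ∧ c.inst = d.inst ∧ T.gt c d)

/-- Convertibility w.r.t. a set of ground equations: the congruence generated by `E`. -/
inductive Conv (E : Set (Trm F V × Trm F V)) : Trm F V → Trm F V → Prop
  | rel {s t : Trm F V} : (s, t) ∈ E → Conv E s t
  | refl (t : Trm F V) : Conv E t t
  | symm {s t : Trm F V} : Conv E s t → Conv E t s
  | trans {s t u : Trm F V} : Conv E s t → Conv E t u → Conv E s u
  | congr {t t' : Trm F V} {f : F} {l r : List (Trm F V)} :
      Conv E t t' → Conv E (.app f (l ++ t :: r)) (.app f (l ++ t' :: r))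

/-- Truth of a literal in the equality Herbrand interpretation generated by `E`. -/
def litTrue (E : Set (Trm F V × Trm F V)) : Lit F V → Prop
  | .pos s t => Conv E s t
  | .neg s t => ¬ Conv E s t

/-- Truth of a (ground) clause in the equality Herbrand interpretation generated by `E`. -/
def ModelsC (E : Set (Trm F V × Trm F V)) (D : Clause F V) : Prop := ∃ L ∈ D, litTrue E L

/-- `R ⊨ (C·θ)`. -/
def Models (E : Set (Trm F V × Trm F V)) (c : Closure F V) : Prop := ModelsC E c.inst

/-- `σ` is an idempotent most general unifier of `s` and `s'`. -/
def IsMGU (σ : V → Trm F V) (s s' : Trm F V) : Prop :=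
  s.subst σ = s'.subst σ ∧
  ∀ τ : V → Trm F V, s.subst τ = s'.subst τ → ∀ x, (σ x).subst τ = τ x

/-- Replacement of all occurrences of `u` by `v` in a term. -/
def replAll (u v : Trm F V) : Trm F V → Trm F V
  | .var x => if Trm.var x = u then v else .var x
  | .app f ts => if Trm.app f ts = u then v else .app f (ts.attach.map fun s => replAll u v s.1)
decreasing_by
  have := List.sizeOf_lt_of_mem s.2
  simp only [Trm.app.sizeOf_spec]
  omega

/-- Replacement of all occurrences of `u` by `v` in a clause. -/
def Clause.replAll (u v : Trm F V) (C : Clause F V) : Clause F V :=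
  C.map fun L => match L with
    | .pos s t => .pos (_root_.replAll u v s) (_root_.replAll u v t)
    | .neg s t => .neg (_root_.replAll u v s) (_root_.replAll u v t)

instance : DecidableEq V := Classical.decEq _

/-- Single-point substitution `{x ↦ t}`. -/
def single (x : V) (t : Trm F V) : V → Trm F V := fun y => if y = x then t else Trm.var y

/-- Ground inferences of the Ground Closure (Horn) Superposition Calculus.
`eqres` is Equality Resolution, `ps1` is Parallel Superposition I (overlap at a
non-variable position `u`), `ps2` is Parallel Superposition II (overlap at or below
a variable `x`, with `xθ = u[tθ]` for a context `u`). -/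
inductive GInf (F V : Type) : Type
  | eqres (C' : Clause F V) (s s' : Trm F V) (σ θ : V → Trm F V)
  | ps1 (D' : Clause F V) (t t' : Trm F V) (C : Clause F V) (u : Trm F V) (σ θ : V → Trm F V)
  | ps2 (D' : Clause F V) (t t' : Trm F V) (C : Clause F V) (x : V) (u : Ctx F V) (θ : V → Trm F V)

namespace GInf

/-- The conclusion of a ground inference. -/
def concl : GInf F V → Closure F V
  | .eqres C' _ _ σ θ => (Clause.subst σ C', θ)
  | .ps1 D' _ t' C u σ θ => (Clause.subst σ (D' + Clause.replAll u t' C), θ)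
  | .ps2 D' _ t' C x u θ => (D' + C, Function.update θ x (u.fill (t'.subst θ)))

/-- The right (or only) premise of a ground inference. -/
def rprem : GInf F V → Closure F V
  | .eqres C' s s' _ θ => (C' + {Lit.neg s s'}, θ)
  | .ps1 _ _ _ C _ _ θ => (C, θ)
  | .ps2 _ _ _ C _ _ θ => (C, θ)

/-- The left premise of a (Superposition) ground inference. -/
def lprem : GInf F V → Closure F V
  | .eqres C' s s' _ θ => (C' + {Lit.neg s s'}, θ)
  | .ps1 D' t t' _ _ _ θ => (D' + {Lit.pos t t'}, θ)
  | .ps2 D' t t' _ _ _ θ => (D' + {Lit.pos t t'}, θ)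

/-- The list of premises of a ground inference. -/
def prems : GInf F V → List (Closure F V)
  | .eqres C' s s' _ θ => [(C' + {Lit.neg s s'}, θ)]
  | .ps1 D' t t' C _ _ θ => [(D' + {Lit.pos t t'}, θ), (C, θ)]
  | .ps2 D' t t' C _ _ θ => [(D' + {Lit.pos t t'}, θ), (C, θ)]

/-- Is the inference a Superposition inference? -/
def IsSup : GInf F V → Prop
  | .eqres _ _ _ _ _ => False
  | .ps1 _ _ _ _ _ _ _ => True
  | .ps2 _ _ _ _ _ _ _ => True

/-- For a Superposition inference with left premise `(D' ∨ t ≈ t' · θ)`: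
the rule `tθ → t'θ` belongs to `R`. -/
def ruleIn (R : Set (Trm F V × Trm F V)) : GInf F V → Prop
  | .eqres _ _ _ _ _ => False
  | .ps1 _ t t' _ _ _ θ => (t.subst θ, t'.subst θ) ∈ R
  | .ps2 _ t t' _ _ _ θ => (t.subst θ, t'.subst θ) ∈ R

/-- Condition (iii) of Definition 5: a Superposition inference with left premise
`(D' ∨ t ≈ t' · θ)` such that `tθ ≻ t'θ` and `(tθ → t'θ) ∉ R`. -/
def ruleNotIn (O : ReductionOrdering F V) (R : Set (Trm F V × Trm F V)) : GInf F V → Prop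
  | .eqres _ _ _ _ _ => False
  | .ps1 _ t t' _ _ _ θ => O.gt (t.subst θ) (t'.subst θ) ∧ (t.subst θ, t'.subst θ) ∉ R
  | .ps2 _ t t' _ _ _ θ => O.gt (t.subst θ) (t'.subst θ) ∧ (t.subst θ, t'.subst θ) ∉ R

end GInf

/-- The common ordering side conditions of the Parallel Superposition rules, for a
left premise `D' ∨ t ≈ t'`, right premise `C`, overlapped term (or variable) `u`,
under the ground substitution `θ`. -/
def SideConds (O : ReductionOrdering F V) (D' : Clause F V) (t t' : Trm F V)
    (C : Clause F V) (u : Trm F V) (θ : V → Trm F V) : Prop :=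
  (u ∈ ssN C ∪ ssPp C →
     clauseGT O (Clause.subst θ C) (Clause.subst θ (D' + {Lit.pos t t'}))) ∧
  (∃ s s',
      (Lit.pos s s' ∈ C ∧ u ∈ s.subterms ∧ O.gt (s.subst θ) (s'.subst θ) ∧
        SMaxIn O (Lit.subst θ (Lit.pos s s')) (Clause.subst θ (C.erase (Lit.pos s s')))) ∨
      (Lit.neg s s' ∈ C ∧ u ∈ s.subterms ∧ O.gt (s.subst θ) (s'.subst θ) ∧
        MaxIn O (Lit.subst θ (Lit.neg s s')) (Clause.subst θ (C.erase (Lit.neg s s'))))) ∧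
  SMaxIn O (Lit.subst θ (Lit.pos t t')) (Clause.subst θ D') ∧
  O.gt (t.subst θ) (t'.subst θ)

/-- Validity of a ground inference: all side conditions of the corresponding rule of
the Ground Closure Horn Superposition Calculus hold. -/
def GInf.IsInf (O : ReductionOrdering F V) : GInf F V → Prop
  | .eqres C' s s' σ θ =>
      Closure.IsGround (C' + {Lit.neg s s'}, θ) ∧
      s.subst θ = s'.subst θ ∧ IsMGU σ s s' ∧
      MaxIn O (Lit.subst θ (Lit.neg s s')) (Clause.subst θ C')
  | .ps1 D' t t' C u σ θ =>
      Closure.IsGround (D' + {Lit.pos t t'}, θ) ∧ Closure.IsGround (C, θ) ∧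
      (¬ ∃ x, u = Trm.var x) ∧ t.subst θ = u.subst θ ∧ IsMGU σ t u ∧
      u ∈ allSub C ∧ SideConds O D' t t' C u θ
  | .ps2 D' t t' C x u θ =>
      Closure.IsGround (D' + {Lit.pos t t'}, θ) ∧ Closure.IsGround (C, θ) ∧
      Trm.var x ∈ allSub C ∧ θ x = u.fill (t.subst θ) ∧
      SideConds O D' t t' C (Trm.var x) θ

/-- Redundant closures (Definition 3). -/
def RedC (O : ReductionOrdering F V) (T : TieBreak F V) (N : Set (Closure F V))
    (c : Closure F V) : Prop :=
  ∀ R, GoodRS O R → Models R c ∨ ∃ d ∈ N, cloGT O T R c d ∧ ¬ Models R d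

/-- Redundant inferences (Definition 4). -/
def RedI (O : ReductionOrdering F V) (T : TieBreak F V) (N : Set (Closure F V))
    (ι : GInf F V) : Prop :=
  ∀ R, GoodRS O R →
    Models R ι.concl
    ∨ (∃ c ∈ N, cloGT O T R ι.rprem c ∧ ¬ Models R c)
    ∨ ι.ruleNotIn O R
    ∨ (ι.IsSup ∧ cloGT O T R ι.lprem ι.rprem)

section Candidate

/-- `s` is a strictly maximal term of the ground clause `D` and occurs in `D` only
(at the top) in positive literals. -/
def StrictMaxTermPos (O : ReductionOrdering F V) (D : Clause F V) (s : Trm F V) : Prop :=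
  (∀ w ∈ allSub D, w = s ∨ O.gt s w) ∧ s ∉ ssN D ∧ s ∉ ssPp D ∧ s ∈ tsP D

/-- The productivity conditions (Horn case) for the closure `(C' ∨ u ≈ u' · θ) ∈ N`
w.r.t. the partial interpretation `Rs`. -/
def ProdConds (O : ReductionOrdering F V) (N : Set (Closure F V))
    (Rs : Set (Trm F V × Trm F V)) (C' : Clause F V) (u u' : Trm F V)
    (θ : V → Trm F V) : Prop :=
  (C' + {Lit.pos u u'}, θ) ∈ N ∧
  Closure.IsGround (C' + {Lit.pos u u'}, θ) ∧
  StrictMaxTermPos O (Clause.subst θ (C' + {Lit.pos u u'})) (u.subst θ) ∧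
  Irred Rs (u.subst θ) ∧
  ¬ Models Rs (C' + {Lit.pos u u'}, θ) ∧
  O.gt (u.subst θ) (u'.subst θ)

/-- `(C' ∨ u ≈ u' · θ)` is the `≫_{Rs}`-smallest closure in `N` satisfying the
productivity conditions for the left-hand side `s`. -/
def ProducesFor (O : ReductionOrdering F V) (T : TieBreak F V) (N : Set (Closure F V))
    (Rs : Set (Trm F V × Trm F V)) (s : Trm F V) (C' : Clause F V) (u u' : Trm F V)
    (θ : V → Trm F V) : Prop :=
  u.subst θ = s ∧ ProdConds O N Rs C' u u' θ ∧
  ∀ D' v v' θ', v.subst θ' = s → ProdConds O N Rs D' v v' θ' →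
    (D' + {Lit.pos v v'}, θ') = (C' + {Lit.pos u u'}, θ) ∨
    cloGT O T Rs (D' + {Lit.pos v v'}, θ') (C' + {Lit.pos u u'}, θ)

/-- `R_s = ⋃_{t ≺ s} E_t`. -/
def Rbelow (O : ReductionOrdering F V) (E : Trm F V → Set (Trm F V × Trm F V))
    (s : Trm F V) : Set (Trm F V × Trm F V) :=
  { p | ∃ t, O.gt s t ∧ p ∈ E t }

/-- `R_* = ⋃_t E_t`. -/
def Rstar (E : Trm F V → Set (Trm F V × Trm F V)) : Set (Trm F V × Trm F V) :=
  { p | ∃ t, p ∈ E t }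

/-- `E` is the family of rule sets of the candidate interpretation constructed from `N`:
`E s = {s → u'θ}` for the `≫_{R_s}`-smallest productive closure for `s` if one
exists, and `E s = ∅` otherwise. -/
def IsCandidate (O : ReductionOrdering F V) (T : TieBreak F V) (N : Set (Closure F V))
    (E : Trm F V → Set (Trm F V × Trm F V)) : Prop :=
  ∀ s : Trm F V,
    (∃ C' u u' θ, ProducesFor O T N (Rbelow O E s) s C' u u' θ ∧
        E s = {(s, u'.subst θ)})
    ∨ ((¬ ∃ C' u u' θ, ProducesFor O T N (Rbelow O E s) s C' u u' θ) ∧ E s = ∅)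

/-- The closure `(C' ∨ u ≈ u' · θ)` produces the rule `uθ → u'θ` in the candidate
interpretation given by `E`. -/
def ProducesRule (O : ReductionOrdering F V) (T : TieBreak F V) (N : Set (Closure F V))
    (E : Trm F V → Set (Trm F V × Trm F V)) (C' : Clause F V) (u u' : Trm F V)
    (θ : V → Trm F V) : Prop :=
  ProducesFor O T N (Rbelow O E (u.subst θ)) (u.subst θ) C' u u' θ ∧
  E (u.subst θ) = {(u.subst θ, u'.subst θ)}

end Candidate

section NonHorn

/-- The graph of the (non-Horn) `R`-redex multiset function `rm_R(t)` of Definition 7. -/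
inductive RMn (R : Set (Trm F V × Trm F V)) :
    Trm F V → Multiset (Multiset (Trm F V)) → Prop
  | irred {t : Trm F V} : Irred R t → RMn R t 0
  | step {t t' u : Trm F V} {b : Bool} {S : Multiset (Multiset (Trm F V))} :
      RewAt R t t' u b → RMn R t' S → RMn R t (({u, u} : Multiset (Trm F V)) ::ₘ S)

open Classical in
/-- The (non-Horn) `R`-redex multiset `rm_R(t)` (via choice). -/
def rmN (R : Set (Trm F V × Trm F V)) (t : Trm F V) : Multiset (Multiset (Trm F V)) :=
  if h : ∃ S, RMn R t S then h.choose else 0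

/-- Contribution of one subterm of a negative literal to the non-Horn `nm_R(C·θ)`. -/
def nmNElt (R : Set (Trm F V × Trm F V)) (θ : V → Trm F V) :
    Trm F V → Multiset (Multiset (Trm F V))
  | .var x => rmN R (θ x)
  | .app f ts => rmN R (.app f (ts.map fun t => nf R (t.subst θ)))

/-- The non-Horn `R`-normalization multiset `nm_R(C·θ)` of Definition 8. -/
def nmN (R : Set (Trm F V × Trm F V)) (C : Clause F V) (θ : V → Trm F V) :
    Multiset (Multiset (Trm F V)) :=
  (ssN C).sum (nmNElt R θ) +
  (tsN C).sum (fun t => {({nf R (t.subst θ), nf R (t.subst θ)} : Multiset (Trm F V))}) +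
  (C.map fun L => match L with
     | .pos s s' => (({({s.subst θ, s'.subst θ} : Multiset (Trm F V))}) :
         Multiset (Multiset (Trm F V)))
     | .neg _ _ => 0).sum

/-- The non-Horn `R`-normalization closure ordering `≫_R` of Definition 8. -/
def cloGTN (O : ReductionOrdering F V) (T : TieBreak F V) (R : Set (Trm F V × Trm F V))
    (c d : Closure F V) : Prop :=
  MultGT (MultGT O.gt) (nmN R c.1 c.2) (nmN R d.1 d.2)
  ∨ (nmN R c.1 c.2 = nmN R d.1 d.2 ∧ clauseGT O c.inst d.inst)
  ∨ (nmN R c.1 c.2 = nmN R d.1 d.2 ∧ c.inst = d.inst ∧ T.gt c d)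

end NonHorn

section Lifting

/-- The set `G(N)` of ground closures of a set `N` of clauses. -/
def GClosures (N : Set (Clause F V)) : Set (Closure F V) :=
  { c | c.1 ∈ N ∧ c.IsGround }

/-- The ordering side conditions of the non-ground Parallel Superposition rule, for
left premise `D' ∨ t ≈ t'`, right premise `C`, overlapped non-variable subterm `u`,
and mgu `σ`. -/
def NGSideConds (O : ReductionOrdering F V) (D' : Clause F V) (t t' : Trm F V)
    (C : Clause F V) (u : Trm F V) (σ : V → Trm F V) : Prop :=
  (u ∈ ssN C ∪ ssPp C →
     ¬ (clauseGT O (Clause.subst σ (D' + {Lit.pos t t'})) (Clause.subst σ C) ∨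
        Clause.subst σ C = Clause.subst σ (D' + {Lit.pos t t'}))) ∧
  (∃ s s',
      (Lit.pos s s' ∈ C ∧ u ∈ s.subterms ∧
        ¬ (O.gt (s'.subst σ) (s.subst σ) ∨ s.subst σ = s'.subst σ) ∧
        SMaxIn O (Lit.subst σ (Lit.pos s s')) (Clause.subst σ (C.erase (Lit.pos s s')))) ∨
      (Lit.neg s s' ∈ C ∧ u ∈ s.subterms ∧
        ¬ (O.gt (s'.subst σ) (s.subst σ) ∨ s.subst σ = s'.subst σ) ∧
        MaxIn O (Lit.subst σ (Lit.neg s s')) (Clause.subst σ (C.erase (Lit.neg s s'))))) ∧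
  SMaxIn O (Lit.subst σ (Lit.pos t t')) (Clause.subst σ D') ∧
  ¬ (O.gt (t'.subst σ) (t.subst σ) ∨ t.subst σ = t'.subst σ)

/-- The ground inference `ι` is a ground instance of an inference of the
(non-ground) Horn Superposition Calculus with Parallel Superposition whose
premises are exactly the clauses occurring in the premise closures of `ι`. -/
def IsGroundInstOfNG (O : ReductionOrdering F V) : GInf F V → Prop
  | .eqres C' s s' σ _ =>
      IsMGU σ s s' ∧
      MaxIn O (Lit.subst σ (Lit.neg s s')) (Clause.subst σ C')
  | .ps1 D' t t' C u σ _ =>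
      (¬ ∃ x, u = Trm.var x) ∧ IsMGU σ t u ∧ u ∈ allSub C ∧
      NGSideConds O D' t t' C u σ
  | .ps2 _ _ _ _ _ _ _ => False

/-- Non-ground inferences of the Horn Superposition Calculus with Parallel
Superposition. -/
inductive NGInf (F V : Type) : Type
  | eqres (C' : Clause F V) (s s' : Trm F V) (σ : V → Trm F V)
  | psup (D' : Clause F V) (t t' : Trm F V) (C : Clause F V) (u : Trm F V) (σ : V → Trm F V)

namespace NGInf

/-- Side conditions of the non-ground rules. -/
def IsInf (O : ReductionOrdering F V) : NGInf F V → Prop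
  | .eqres C' s s' σ =>
      IsMGU σ s s' ∧ MaxIn O (Lit.subst σ (Lit.neg s s')) (Clause.subst σ C')
  | .psup D' t t' C u σ =>
      (¬ ∃ x, u = Trm.var x) ∧ IsMGU σ t u ∧ u ∈ allSub C ∧
      NGSideConds O D' t t' C u σ

/-- Premises of a non-ground inference. -/
def prems : NGInf F V → List (Clause F V)
  | .eqres C' s s' _ => [C' + {Lit.neg s s'}]
  | .psup D' t t' C _ _ => [D' + {Lit.pos t t'}, C]

/-- Conclusion of a non-ground inference. -/
def concl : NGInf F V → Clause F V
  | .eqres C' _ _ σ => Clause.subst σ C'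
  | .psup D' _ t' C u σ => Clause.subst σ (D' + Clause.replAll u t' C)

/-- The set `G(ι)` of ground instances of a non-ground inference. -/
def GInsts (O : ReductionOrdering F V) : NGInf F V → Set (GInf F V)
  | .eqres C' s s' σ => { g | ∃ θ, g = GInf.eqres C' s s' σ θ ∧ g.IsInf O }
  | .psup D' t t' C u σ => { g | ∃ θ, g = GInf.ps1 D' t t' C u σ θ ∧ g.IsInf O }

end NGInf

end Lifting
section AuxLemma7

variable {F V : Type}

private lemma aux_no_descent (O : ReductionOrdering F V) (g : Trm F V → Trm F V)
    (hm : ∀ {x y : Trm F V}, O.gt x y → O.gt (g x) (g y)) :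
    ∀ x : Trm F V, ¬ O.gt x (g x) := by
  intro x
  refine O.wf.induction (C := fun z => ¬ O.gt z (g z)) x ?_
  intro z ih hz
  exact ih (g z) hz (hm hz)

private lemma aux_ground_app {f : F} {ts : List (Trm F V)}
    (h : (Trm.app f ts).IsGround) : ∀ t ∈ ts, t.IsGround := by
  cases h with | app h => exact h

private lemma aux_sizeof_ne {f : F} {l r : List (Trm F V)} {t : Trm F V} :
    t ≠ Trm.app f (l ++ t :: r) := by
  intro he
  have h1 : sizeOf t < sizeOf (l ++ t :: r) :=
    List.sizeOf_lt_of_mem (by simp)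
  have h2 : sizeOf (Trm.app f (l ++ t :: r)) = 1 + sizeOf f + sizeOf (l ++ t :: r) := by
    simp [Trm.app.sizeOf_spec]
  rw [← he] at h2
  omega

private lemma aux_gt_imm (O : ReductionOrdering F V) {f : F} {l r : List (Trm F V)}
    {t : Trm F V} (hg : (Trm.app f (l ++ t :: r)).IsGround) :
    O.gt (Trm.app f (l ++ t :: r)) t := by
  have htg : t.IsGround := aux_ground_app hg t (by simp)
  rcases O.total_ground htg hg aux_sizeof_ne with h | h
  · exact absurd h (aux_no_descent O (fun x => Trm.app f (l ++ x :: r))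
      (fun hxy => O.compat_ctx f l r hxy) t)
  · exact h

private lemma aux_rewat_mono {R R' : Set (Trm F V × Trm F V)} {x y u : Trm F V} {b : Bool}
    (h : RewAt R x y u b) (hs : ∀ v, (u, v) ∈ R → (u, v) ∈ R') : RewAt R' x y u b := by
  induction h with
  | root h => exact .root (hs _ h)
  | congr h ih => exact .congr (ih hs)

private lemma aux_rewat_rule {R : Set (Trm F V × Trm F V)} {x y u : Trm F V} {b : Bool}
    (h : RewAt R x y u b) : ∃ v, (u, v) ∈ R := by
  induction h with
  | root h => exact ⟨_, h⟩
  | congr h ih => exact ih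

private lemma aux_rewat_lhs_le (O : ReductionOrdering F V)
    {R : Set (Trm F V × Trm F V)} {x y u : Trm F V} {b : Bool}
    (h : RewAt R x y u b) : x.IsGround → u = x ∨ O.gt x u := by
  induction h with
  | root h => exact fun _ => Or.inl rfl
  | @congr t t' u b f l r h ih =>
    intro hx
    have htg : t.IsGround := aux_ground_app hx t (by simp)
    have hxt : O.gt (Trm.app f (l ++ t :: r)) t := aux_gt_imm O hx
    rcases ih htg with h' | h'
    · exact Or.inr (h' ▸ hxt)
    · exact Or.inr (O.trans hxt h')

private lemma aux_rewat_gt (O : ReductionOrdering F V)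
    {R : Set (Trm F V × Trm F V)} (hR : ∀ p ∈ R, O.gt p.1 p.2)
    {x y u : Trm F V} {b : Bool} (h : RewAt R x y u b) : O.gt x y := by
  induction h with
  | root h => exact hR _ h
  | congr h ih => exact O.compat_ctx _ _ _ ih

private lemma aux_rewat_ground {R : Set (Trm F V × Trm F V)}
    (hR : ∀ p ∈ R, (p.2 : Trm F V).IsGround)
    {x y u : Trm F V} {b : Bool} (h : RewAt R x y u b) : x.IsGround → y.IsGround := by
  induction h with
  | root h => exact fun _ => hR _ h
  | @congr t t' u b f l r h ih =>
    intro hx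
    constructor
    intro w hw
    simp only [List.mem_append, List.mem_cons] at hw
    rcases hw with hw | hw | hw
    · exact aux_ground_app hx w (by simp [hw])
    · exact hw ▸ ih (aux_ground_app hx t (by simp))
    · exact aux_ground_app hx w (by simp [hw])

private lemma aux_conv_mono {R R' : Set (Trm F V × Trm F V)} (hs : R ⊆ R')
    {x y : Trm F V} (h : Conv R x y) : Conv R' x y := by
  induction h with
  | rel h => exact .rel (hs h)
  | refl t => exact .refl t
  | symm _ ih => exact .symm ih
  | trans _ _ ih1 ih2 => exact .trans ih1 ih2
  | congr _ ih => exact .congr ih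

private lemma aux_rewat_conv {R : Set (Trm F V × Trm F V)} {x y u : Trm F V} {b : Bool}
    (h : RewAt R x y u b) : Conv R x y := by
  induction h with
  | root h => exact .rel h
  | congr h ih => exact .congr ih

private lemma aux_rtg_conv {R : Set (Trm F V × Trm F V)} {x y : Trm F V}
    (h : Relation.ReflTransGen (Step R) x y) : Conv R x y := by
  induction h with
  | refl => exact .refl x
  | tail h1 h2 ih =>
    obtain ⟨u, b, hw⟩ := h2
    exact .trans ih (aux_rewat_conv hw)

private lemma aux_list_split {α : Type} :
    ∀ (l₁ : List α) (t₁ : α) (r₁ l₂ : List α) (t₂ : α) (r₂ : List α),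
    l₁ ++ t₁ :: r₁ = l₂ ++ t₂ :: r₂ →
    (l₁ = l₂ ∧ t₁ = t₂ ∧ r₁ = r₂) ∨
    (∃ m, l₂ = l₁ ++ t₁ :: m ∧ r₁ = m ++ t₂ :: r₂) ∨
    (∃ m, l₁ = l₂ ++ t₂ :: m ∧ r₂ = m ++ t₁ :: r₁) := by
  intro l₁
  induction l₁ with
  | nil =>
    intro t₁ r₁ l₂ t₂ r₂ h
    cases l₂ with
    | nil => simp_all
    | cons x l₂' =>
      simp only [List.nil_append, List.cons_append, List.cons.injEq] at h
      exact Or.inr (Or.inl ⟨l₂', by simp [h.1], h.2⟩)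
  | cons x l₁' ih =>
    intro t₁ r₁ l₂ t₂ r₂ h
    cases l₂ with
    | nil =>
      simp only [List.nil_append, List.cons_append, List.cons.injEq] at h
      exact Or.inr (Or.inr ⟨l₁', by simp [h.1], h.2.symm⟩)
    | cons y l₂' =>
      simp only [List.cons_append, List.cons.injEq] at h
      obtain ⟨hxy, h'⟩ := h
      rcases ih t₁ r₁ l₂' t₂ r₂ h' with ⟨e1, e2, e3⟩ | ⟨m, e1, e2⟩ | ⟨m, e1, e2⟩
      · exact Or.inl ⟨by rw [hxy, e1], e2, e3⟩
      · exact Or.inr (Or.inl ⟨m, by simp [hxy, e1], e2⟩)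
      · exact Or.inr (Or.inr ⟨m, by simp [hxy, e1], e2⟩)

private lemma aux_self_mem_subterms (t : Trm F V) : t ∈ t.subterms := by
  cases t with
  | var x => rw [Trm.subterms]; exact Finset.mem_singleton_self _
  | app f ts => rw [Trm.subterms]; exact Finset.mem_insert_self _ _

end AuxLemma7
section Candidate2

variable {F V : Type} {O : ReductionOrdering F V} {T : TieBreak F V} {N : Set (Closure F V)}
  {E : Trm F V → Set (Trm F V × Trm F V)}

private lemma aux_mem_E_spec (hE : IsCandidate O T N E) {l r t : Trm F V} (h : (l, r) ∈ E t) :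
    l = t ∧ E t = {(t, r)} ∧ l.IsGround ∧ r.IsGround ∧ O.gt l r ∧ Irred (Rbelow O E t) t := by
  rcases hE t with ⟨C', u, u', θ, hp, hEt⟩ | ⟨_, hEt⟩
  · rw [hEt] at h
    have h' : (l, r) = (t, u'.subst θ) := h
    have hl : l = t := congrArg Prod.fst h'
    have hr : r = u'.subst θ := congrArg Prod.snd h'
    obtain ⟨husθ, hpc, _⟩ := hp
    obtain ⟨_, hgc, _, hirr, _, hgt⟩ := hpc
    have hm : Lit.pos (u.subst θ) (u'.subst θ) ∈ Closure.inst (C' + {Lit.pos u u'}, θ) := by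
      refine Multiset.mem_map.2 ⟨Lit.pos u u', ?_, rfl⟩
      simp
    have hground := hgc _ hm
    obtain ⟨hug, hu'g⟩ : (u.subst θ).IsGround ∧ (u'.subst θ).IsGround := hground
    refine ⟨hl, by rw [hEt, hr], ?_, ?_, ?_, ?_⟩
    · rw [hl, ← husθ]; exact hug
    · rw [hr]; exact hu'g
    · rw [hl, hr, ← husθ]; exact hgt
    · exact husθ ▸ hirr
  · rw [hEt] at h
    exact absurd h (Set.notMem_empty _)

private lemma aux_rstar_rules (hE : IsCandidate O T N E)
    {p : Trm F V × Trm F V} (hp : p ∈ Rstar E) :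
    p.1.IsGround ∧ p.2.IsGround ∧ O.gt p.1 p.2 := by
  obtain ⟨x, y⟩ := p
  obtain ⟨t, ht⟩ := hp
  have h := aux_mem_E_spec hE ht
  exact ⟨h.2.2.1, h.2.2.2.1, h.2.2.2.2.1⟩

private lemma aux_rhs_unique (hE : IsCandidate O T N E) {l r r' : Trm F V}
    (h : (l, r) ∈ Rstar E) (h' : (l, r') ∈ Rstar E) : r = r' := by
  obtain ⟨t, ht⟩ := h
  obtain ⟨t', ht'⟩ := h'
  obtain ⟨e1, he1, -⟩ := aux_mem_E_spec hE ht
  obtain ⟨e2, he2, -⟩ := aux_mem_E_spec hE ht'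
  subst e1
  subst e2
  rw [he1] at ht'
  have : (l, r') = (l, r) := ht'
  exact (congrArg Prod.snd this).symm

/-- any Rstar rule whose lhs is smaller than `a` is in `Rbelow O E a`. -/
private lemma aux_rule_below (hE : IsCandidate O T N E) {a u v : Trm F V} (hau : O.gt a u)
    (h : (u, v) ∈ Rstar E) : (u, v) ∈ Rbelow O E a := by
  obtain ⟨t, ht⟩ := h
  have e := (aux_mem_E_spec hE ht).1
  exact ⟨t, e ▸ hau, ht⟩

private lemma aux_no_root_inner (hE : IsCandidate O T N E) {a b c u₂ : Trm F V} {b₂ : Bool}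
    {f : F} {l r : List (Trm F V)} {t : Trm F V} (hab : (a, b) ∈ Rstar E)
    (ha : a = Trm.app f (l ++ t :: r)) (h2 : RewAt (Rstar E) t c u₂ b₂) : False := by
  obtain ⟨tt, htt⟩ := hab
  obtain ⟨e1, -, hag, -, -, hirr⟩ := aux_mem_E_spec hE htt
  rw [← e1] at hirr
  subst ha
  have htg : t.IsGround := aux_ground_app hag t (by simp)
  have hat : O.gt (Trm.app f (l ++ t :: r)) t := aux_gt_imm O hag
  have hau : O.gt (Trm.app f (l ++ t :: r)) u₂ := by
    rcases aux_rewat_lhs_le O h2 htg with h' | h'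
    · exact h' ▸ hat
    · exact O.trans hat h'
  have h2' : RewAt (Rbelow O E (Trm.app f (l ++ t :: r))) t c u₂ b₂ :=
    aux_rewat_mono h2 (fun v hv => aux_rule_below hE hau hv)
  exact hirr _ ⟨u₂, false, RewAt.congr h2'⟩

private lemma aux_rewat_inv {R : Set (Trm F V × Trm F V)} {a c u : Trm F V} {b : Bool}
    (h : RewAt R a c u b) :
    ((a, c) ∈ R ∧ u = a) ∨
    ∃ (f : F) (l : List (Trm F V)) (t t' : Trm F V) (r : List (Trm F V)) (b' : Bool),
      a = Trm.app f (l ++ t :: r) ∧ c = Trm.app f (l ++ t' :: r) ∧ RewAt R t t' u b' := by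
  cases h with
  | root h => exact Or.inl ⟨h, rfl⟩
  | congr h => exact Or.inr ⟨_, _, _, _, _, _, rfl, rfl, h⟩

private lemma aux_diamond (hE : IsCandidate O T N E) {a b u₁ : Trm F V} {b₁ : Bool}
    (h1 : RewAt (Rstar E) a b u₁ b₁) :
    ∀ {c u₂ : Trm F V} {b₂ : Bool}, RewAt (Rstar E) a c u₂ b₂ →
      b = c ∨ ∃ d, Step (Rstar E) b d ∧ Step (Rstar E) c d := by
  induction h1 with
  | @root u v h =>
    intro c u₂ b₂ h2
    rcases aux_rewat_inv h2 with ⟨h', -⟩ | ⟨f, l, t, t', r, b', ha, -, h2'⟩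
    · exact Or.inl (aux_rhs_unique hE h h')
    · exact (aux_no_root_inner hE h ha h2').elim
  | @congr t t' u bb f l r h1' ih =>
    intro c u₂ b₂ h2
    rcases aux_rewat_inv h2 with ⟨h', -⟩ | ⟨f₂, l₂, t₂, t₂', r₂, b', ha, hc, h2'⟩
    · exact (aux_no_root_inner hE h' rfl h1').elim
    · have hf : f = f₂ ∧ l ++ t :: r = l₂ ++ t₂ :: r₂ := by
        simpa [Trm.app.injEq] using ha
      obtain ⟨hf, hl⟩ := hf
      subst hf
      subst hc
      rcases aux_list_split l t r l₂ t₂ r₂ hl with ⟨e1, e2, e3⟩ | ⟨m, e1, e2⟩ | ⟨m, e1, e2⟩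
      · subst e1; subst e2; subst e3
        rcases ih h2' with he | ⟨d', s1, s2⟩
        · exact Or.inl (by rw [he])
        · obtain ⟨ua, ba, hwa⟩ := s1
          obtain ⟨ub, bb', hwb⟩ := s2
          exact Or.inr ⟨Trm.app f (l ++ d' :: r),
            ⟨ua, false, RewAt.congr hwa⟩, ⟨ub, false, RewAt.congr hwb⟩⟩
      · subst e1; subst e2
        refine Or.inr ⟨Trm.app f (l ++ t' :: (m ++ t₂' :: r₂)), ?_, ?_⟩
        · refine ⟨u₂, false, ?_⟩
          have h' := RewAt.congr (f := f) (l := l ++ t' :: m) (r := r₂) h2'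
          simpa using h'
        · refine ⟨u, false, ?_⟩
          have h' := RewAt.congr (f := f) (l := l) (r := m ++ t₂' :: r₂) h1'
          simpa using h'
      · subst e1; subst e2
        refine Or.inr ⟨Trm.app f (l₂ ++ t₂' :: (m ++ t' :: r)), ?_, ?_⟩
        · refine ⟨u₂, false, ?_⟩
          have h' := RewAt.congr (f := f) (l := l₂) (r := m ++ t' :: r) h2'
          simpa using h'
        · refine ⟨u, false, ?_⟩
          have h' := RewAt.congr (f := f) (l := l₂ ++ t₂' :: m) (r := r) h1'
          simpa using h'

end Candidate2
section Candidate3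

variable {F V : Type} {O : ReductionOrdering F V} {T : TieBreak F V} {N : Set (Closure F V)}
  {E : Trm F V → Set (Trm F V × Trm F V)}

private lemma aux_cr (hE : IsCandidate O T N E) :
    ∀ a b c : Trm F V, Step (Rstar E) a b → Step (Rstar E) a c →
      ∃ d, Relation.ReflGen (Step (Rstar E)) b d ∧
        Relation.ReflTransGen (Step (Rstar E)) c d := by
  intro a b c hab hac
  obtain ⟨u1, b1, h1⟩ := hab
  obtain ⟨u2, b2, h2⟩ := hac
  rcases aux_diamond hE h1 h2 with he | ⟨d, s1, s2⟩
  · exact ⟨b, Relation.ReflGen.refl, he ▸ Relation.ReflTransGen.refl⟩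
  · exact ⟨d, Relation.ReflGen.single s1, Relation.ReflTransGen.single s2⟩

private lemma aux_conv_join (hE : IsCandidate O T N E) {x y : Trm F V}
    (h : Conv (Rstar E) x y) :
    Relation.Join (Relation.ReflTransGen (Step (Rstar E))) x y := by
  induction h with
  | @rel a b h => exact ⟨b, Relation.ReflTransGen.single ⟨a, true, RewAt.root h⟩,
      Relation.ReflTransGen.refl⟩
  | refl t => exact ⟨t, Relation.ReflTransGen.refl, Relation.ReflTransGen.refl⟩
  | symm _ ih => obtain ⟨d, p, q⟩ := ih; exact ⟨d, q, p⟩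
  | trans _ _ ih1 ih2 =>
    obtain ⟨d, xd, td⟩ := ih1
    obtain ⟨e, te, ue⟩ := ih2
    obtain ⟨w, dw, ew⟩ := Relation.church_rosser (aux_cr hE) td te
    exact ⟨w, xd.trans dw, ue.trans ew⟩
  | @congr t t' f l r _ ih =>
    obtain ⟨d, td, t'd⟩ := ih
    have lift : ∀ {x y : Trm F V}, Relation.ReflTransGen (Step (Rstar E)) x y →
        Relation.ReflTransGen (Step (Rstar E))
          (Trm.app f (l ++ x :: r)) (Trm.app f (l ++ y :: r)) := by
      intro x y hxy
      refine Relation.ReflTransGen.lift (fun z => Trm.app f (l ++ z :: r)) ?_ _ _ hxy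
      rintro a b ⟨u, bb, hw⟩
      exact ⟨u, false, RewAt.congr hw⟩
    exact ⟨Trm.app f (l ++ d :: r), lift td, lift t'd⟩

private lemma aux_descend (hE : IsCandidate O T N E) {s x y : Trm F V}
    (hx : x.IsGround) (hsx : O.gt s x)
    (h : Relation.ReflTransGen (Step (Rstar E)) x y) :
    Relation.ReflTransGen (Step (Rbelow O E s)) x y ∧ y.IsGround ∧ O.gt s y := by
  induction h with
  | refl => exact ⟨Relation.ReflTransGen.refl, hx, hsx⟩
  | @tail y' y _ h2 ih =>
    obtain ⟨hrt, hy'g, hsy'⟩ := ih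
    obtain ⟨u, bb, hw⟩ := h2
    have hsu : O.gt s u := by
      rcases aux_rewat_lhs_le O hw hy'g with h' | h'
      · exact h' ▸ hsy'
      · exact O.trans hsy' h'
    have hw' : RewAt (Rbelow O E s) y' y u bb :=
      aux_rewat_mono hw (fun v hv => aux_rule_below hE hsu hv)
    refine ⟨hrt.tail ⟨u, bb, hw'⟩, ?_, ?_⟩
    · exact aux_rewat_ground (fun p hp => (aux_rstar_rules hE hp).2.1) hw hy'g
    · exact O.trans hsy' (aux_rewat_gt O (fun p hp => (aux_rstar_rules hE hp).2.2) hw)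

end Candidate3


/-- Lemma 7: if every term occurring in negative literals of `Cθ` is
`≻`-smaller than the ground term `s`, every term occurring in positive literals of
`Cθ` is smaller than or equal to `s`, and `R_s ⊨ (C·θ)`, then `R_* ⊨ (C·θ)`. -/
theorem model_construction_monotone {F V : Type} (O : ReductionOrdering F V)
    (T : TieBreak F V) (N : Set (Closure F V))
    (E : Trm F V → Set (Trm F V × Trm F V)) (hE : IsCandidate O T N E)
    (s : Trm F V) (hs : s.IsGround)
    (C : Clause F V) (θ : V → Trm F V) (hg : Closure.IsGround (C, θ))
    (hneg : ∀ w ∈ ssN (Clause.subst θ C), O.gt s w)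
    (hpos : ∀ w ∈ ssP (Clause.subst θ C), w = s ∨ O.gt s w)
    (hmod : Models (Rbelow O E s) (C, θ)) :
    Models (Rstar E) (C, θ) := by
  obtain ⟨L, hL, hLt⟩ := hmod
  refine ⟨L, hL, ?_⟩
  have hsub : Rbelow O E s ⊆ Rstar E := fun p hp => by
    obtain ⟨t, -, ht⟩ := hp; exact ⟨t, ht⟩
  cases L with
  | pos a b => exact aux_conv_mono hsub hLt
  | neg a b =>
    intro hc
    have hLg : (Lit.neg a b).IsGround := hg _ hL
    obtain ⟨hag, hbg⟩ : a.IsGround ∧ b.IsGround := hLg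
    have hmemN : ∀ w ∈ (Lit.neg a b).negSubs, w ∈ ssN (Clause.subst θ C) := by
      intro w hw
      exact Finset.mem_sup.2 ⟨Lit.neg a b, Multiset.mem_toFinset.2 hL, hw⟩
    have hsa : O.gt s a := hneg a (hmemN a
      (Finset.mem_union_left _ (aux_self_mem_subterms a)))
    have hsb : O.gt s b := hneg b (hmemN b
      (Finset.mem_union_right _ (aux_self_mem_subterms b)))
    obtain ⟨d, had, hbd⟩ := aux_conv_join hE hc
    have pa := (aux_descend hE hag hsa had).1
    have pb := (aux_descend hE hbg hsb hbd).1
    exact hLt (Conv.trans (aux_rtg_conv pa) (Conv.symm (aux_rtg_conv pb)))
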